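/- Let a : ℤ → ℂ with Σ_{j∈ℤ} |a(j)| < ∞, A_n the n×n Toeplitz matrix with entries a(j₁−j₂), and Ã_n the circulant-type matrix with entries ã_n(j₁−j₂) where ã_n(0) = a(0)+a(n)+a(−n), ã_n(j) = a(j)+a(j−n) for 0 < j ≤ n−1 and ã_n(j) = a(j)+a(j+n) for −(n−1) ≤ j < 0. Then (1/n) Tr((A_n − Ã_n)(A_n − Ã_n)*) → 0 as n → ∞. -/

import Mathlib

open Matrix Filter Finset

theorem toeplitz_circulant_approximation
    (a : ℤ → ℂ) (ha : Summable (fun j : ℤ => ‖a j‖))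
    (A At : (n : ℕ) → Matrix (Fin n) (Fin n) ℂ)
    (hA : ∀ (n : ℕ) (j₁ j₂ : Fin n), A n j₁ j₂ = a ((j₁ : ℤ) - (j₂ : ℤ)))
    (hAt : ∀ (n : ℕ) (j₁ j₂ : Fin n),
      At n j₁ j₂ =
        (if (j₁ : ℤ) - (j₂ : ℤ) = 0 then a 0 + a n + a (-(n : ℤ))
         else if 0 < (j₁ : ℤ) - (j₂ : ℤ) then
           a ((j₁ : ℤ) - (j₂ : ℤ)) + a ((j₁ : ℤ) - (j₂ : ℤ) - n)
         else a ((j₁ : ℤ) - (j₂ : ℤ)) + a ((j₁ : ℤ) - (j₂ : ℤ) + n))) :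
    Tendsto (fun n : ℕ =>
        (1 / n : ℝ) * (Matrix.trace ((A n - At n) * (A n - At n)ᴴ)).re)
      atTop (nhds 0) := by
  classical
  -- squared norms are summable over ℤ
  have ha2 : Summable (fun j : ℤ => ‖a j‖ ^ 2) := by
    refine Summable.of_nonneg_of_le (fun j => by positivity) (fun j => ?_)
      (ha.mul_left (∑' j : ℤ, ‖a j‖))
    have h1 : ‖a j‖ ≤ ∑' j : ℤ, ‖a j‖ := Summable.le_tsum ha j (fun _ _ => norm_nonneg _)
    calc ‖a j‖ ^ 2 = ‖a j‖ * ‖a j‖ := sq ‖a j‖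
      _ ≤ (∑' j : ℤ, ‖a j‖) * ‖a j‖ :=
          mul_le_mul_of_nonneg_right h1 (norm_nonneg _)
  set c : ℕ → ℝ := fun m => ‖a (-(m : ℤ))‖ ^ 2 with hc_def
  set d : ℕ → ℝ := fun m => ‖a (m : ℤ)‖ ^ 2 with hd_def
  have hc0 : ∀ m, 0 ≤ c m := fun m => by positivity
  have hd0 : ∀ m, 0 ≤ d m := fun m => by positivity
  have hc : Summable c :=
    ha2.comp_injective (fun m n h => Nat.cast_injective (neg_injective h))
  have hd : Summable d := ha2.comp_injective (fun m n h => Nat.cast_injective h)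
  set Tc : ℕ → ℝ := fun t => ∑' m : ℕ, c (m + t) with hTc_def
  set Td : ℕ → ℝ := fun t => ∑' m : ℕ, d (m + t) with hTd_def
  -- norms of the difference matrix entries
  have hnorm : ∀ (n : ℕ) (i j : Fin n), ‖(A n - At n) i j‖ ^ 2 =
      (if ((i : ℤ) - (j : ℤ)) = 0 then ‖a n + a (-(n : ℤ))‖ ^ 2
       else if 0 < (i : ℤ) - (j : ℤ) then ‖a ((i : ℤ) - (j : ℤ) - n)‖ ^ 2
       else ‖a ((i : ℤ) - (j : ℤ) + n)‖ ^ 2) := by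
    intro n i j
    rw [Matrix.sub_apply, hA, hAt]
    split_ifs with h1 h2
    · have : a ((i : ℤ) - (j : ℤ)) - (a 0 + a n + a (-(n : ℤ)))
          = -(a n + a (-(n : ℤ))) := by rw [h1]; ring
      rw [this, norm_neg]
    · have : a ((i : ℤ) - (j : ℤ)) -
          (a ((i : ℤ) - (j : ℤ)) + a ((i : ℤ) - (j : ℤ) - n))
          = -(a ((i : ℤ) - (j : ℤ) - n)) := by ring
      rw [this, norm_neg]
    · have : a ((i : ℤ) - (j : ℤ)) -
          (a ((i : ℤ) - (j : ℤ)) + a ((i : ℤ) - (j : ℤ) + n))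
          = -(a ((i : ℤ) - (j : ℤ) + n)) := by ring
      rw [this, norm_neg]
  -- trace formula
  have htr : ∀ n : ℕ, (Matrix.trace ((A n - At n) * (A n - At n)ᴴ)).re
      = ∑ i : Fin n, ∑ j : Fin n, ‖(A n - At n) i j‖ ^ 2 := by
    intro n
    have hz : ∀ z : ℂ, (z * star z).re = ‖z‖ ^ 2 := fun z => by
      rw [show star z = (starRingEnd ℂ) z from rfl, Complex.mul_conj,
        Complex.ofReal_re, Complex.normSq_eq_norm_sq]
    rw [Matrix.trace, Complex.re_sum]
    refine Finset.sum_congr rfl (fun i _ => ?_)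
    rw [Matrix.diag_apply, Matrix.mul_apply, Complex.re_sum]
    refine Finset.sum_congr rfl (fun j _ => ?_)
    rw [Matrix.conjTranspose_apply, hz]
  -- row bound
  have hrow : ∀ (n : ℕ) (i : Fin n),
      ∑ j : Fin n, ‖(A n - At n) i j‖ ^ 2
        ≤ ‖a n + a (-(n : ℤ))‖ ^ 2 + Tc (n - (i : ℕ)) + Td ((i : ℕ) + 1) := by
    intro n i
    have hin : (i : ℕ) < n := i.isLt
    set F : ℕ → ℝ := fun j =>
      (if ((i : ℤ) - (j : ℤ)) = 0 then ‖a n + a (-(n : ℤ))‖ ^ 2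
       else if 0 < (i : ℤ) - (j : ℤ) then ‖a ((i : ℤ) - (j : ℤ) - n)‖ ^ 2
       else ‖a ((i : ℤ) - (j : ℤ) + n)‖ ^ 2) with hF_def
    have hsum : ∑ j : Fin n, ‖(A n - At n) i j‖ ^ 2 = ∑ j ∈ range n, F j := by
      rw [← Fin.sum_univ_eq_sum_range F n]
      refine Finset.sum_congr rfl (fun j _ => ?_)
      rw [hnorm n i j]
    rw [hsum, range_eq_Ico,
      ← Finset.sum_Ico_consecutive F (Nat.zero_le (i : ℕ)) hin.le,
      Finset.sum_eq_sum_Ico_succ_bot hin F]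
    have hFi : F (i : ℕ) = ‖a n + a (-(n : ℤ))‖ ^ 2 := by simp [hF_def]
    have hleft : ∑ j ∈ Ico 0 (i : ℕ), F j ≤ Tc (n - (i : ℕ)) := by
      have heq : ∀ j ∈ Ico 0 (i : ℕ), F j = c (j + (n - (i : ℕ))) := by
        intro j hj
        rw [Finset.mem_Ico] at hj
        have hji : j < (i : ℕ) := hj.2
        simp only [hF_def]
        rw [if_neg (show ¬((i : ℤ) - (j : ℤ) = 0) by omega),
          if_pos (show (0 : ℤ) < (i : ℤ) - (j : ℤ) by omega)]
        have harg : (i : ℤ) - (j : ℤ) - (n : ℤ)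
            = -((j + (n - (i : ℕ)) : ℕ) : ℤ) := by
          push_cast [Nat.cast_sub hin.le]
          ring
        rw [harg]
      rw [Finset.sum_congr rfl heq]
      exact Summable.sum_le_tsum _ (fun _ _ => hc0 _)
        ((summable_nat_add_iff (n - (i : ℕ))).mpr hc)
    have hright : ∑ j ∈ Ico ((i : ℕ) + 1) n, F j ≤ Td ((i : ℕ) + 1) := by
      have heq : ∀ j ∈ Ico ((i : ℕ) + 1) n, F j = d (n + (i : ℕ) - j) := by
        intro j hj
        rw [Finset.mem_Ico] at hj
        simp only [hF_def]
        rw [if_neg (show ¬((i : ℤ) - (j : ℤ) = 0) by omega),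
          if_neg (show ¬((0 : ℤ) < (i : ℤ) - (j : ℤ)) by omega)]
        have harg : (i : ℤ) - (j : ℤ) + (n : ℤ) = ((n + (i : ℕ) - j : ℕ) : ℤ) := by
          omega
        rw [harg]
      rw [Finset.sum_congr rfl heq, Finset.sum_Ico_eq_sum_range]
      have heq2 : ∀ m ∈ range (n - ((i : ℕ) + 1)),
          d (n + (i : ℕ) - ((i : ℕ) + 1 + m))
            = (fun m => d (m + ((i : ℕ) + 1))) ((n - ((i : ℕ) + 1)) - 1 - m) := by
        intro m hm
        rw [Finset.mem_range] at hm
        simp only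
        congr 1
        omega
      rw [Finset.sum_congr rfl heq2,
        Finset.sum_range_reflect (fun m => d (m + ((i : ℕ) + 1)))]
      exact Summable.sum_le_tsum _ (fun _ _ => hd0 _)
        ((summable_nat_add_iff ((i : ℕ) + 1)).mpr hd)
    rw [hFi]
    linarith [hleft, hright]
  -- the comparison function
  set g : ℕ → ℝ := fun n =>
    ‖a n + a (-(n : ℤ))‖ ^ 2 + (1 / n : ℝ) * ∑ i ∈ range n, (Tc (i + 1) + Td (i + 1))
    with hg_def
  have hbound : ∀ n : ℕ, 1 ≤ n →
      (1 / n : ℝ) * (Matrix.trace ((A n - At n) * (A n - At n)ᴴ)).re ≤ g n := by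
    intro n hn
    rw [htr n]
    have htot : ∑ i : Fin n, ∑ j : Fin n, ‖(A n - At n) i j‖ ^ 2
        ≤ (n : ℝ) * ‖a n + a (-(n : ℤ))‖ ^ 2
          + ∑ i ∈ range n, (Tc (i + 1) + Td (i + 1)) := by
      calc ∑ i : Fin n, ∑ j : Fin n, ‖(A n - At n) i j‖ ^ 2
          ≤ ∑ i : Fin n,
              (‖a n + a (-(n : ℤ))‖ ^ 2 + Tc (n - (i : ℕ)) + Td ((i : ℕ) + 1)) :=
            Finset.sum_le_sum (fun i _ => hrow n i)
        _ = (n : ℝ) * ‖a n + a (-(n : ℤ))‖ ^ 2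
              + (∑ i ∈ range n, Tc (n - i) + ∑ i ∈ range n, Td (i + 1)) := by
            rw [Fin.sum_univ_eq_sum_range
              (fun i => ‖a n + a (-(n : ℤ))‖ ^ 2 + Tc (n - i) + Td (i + 1)) n]
            rw [Finset.sum_add_distrib, Finset.sum_add_distrib, Finset.sum_const,
              Finset.card_range, nsmul_eq_mul]
            ring
        _ = (n : ℝ) * ‖a n + a (-(n : ℤ))‖ ^ 2
              + ∑ i ∈ range n, (Tc (i + 1) + Td (i + 1)) := by
            have : ∑ i ∈ range n, Tc (n - i) = ∑ i ∈ range n, Tc (i + 1) := by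
              rw [← Finset.sum_range_reflect (fun i => Tc (n - i)) n]
              refine Finset.sum_congr rfl (fun i hi => ?_)
              rw [Finset.mem_range] at hi
              congr 1
              omega
            rw [this, ← Finset.sum_add_distrib]
    have hn0 : (0 : ℝ) < (n : ℝ) := by exact_mod_cast hn
    have h1 : (1 / n : ℝ) * (∑ i : Fin n, ∑ j : Fin n, ‖(A n - At n) i j‖ ^ 2)
        ≤ (1 / n : ℝ) * ((n : ℝ) * ‖a n + a (-(n : ℤ))‖ ^ 2
          + ∑ i ∈ range n, (Tc (i + 1) + Td (i + 1))) :=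
      mul_le_mul_of_nonneg_left htot (by positivity)
    refine h1.trans_eq ?_
    rw [hg_def]
    field_simp
  -- limits
  have hz : Tendsto a cofinite (nhds 0) :=
    tendsto_zero_iff_norm_tendsto_zero.mpr ha.tendsto_cofinite_zero
  have hcast : Tendsto (fun n : ℕ => ((n : ℤ))) atTop cofinite := by
    rw [← Nat.cofinite_eq_atTop]
    exact Function.Injective.tendsto_cofinite Nat.cast_injective
  have hcastneg : Tendsto (fun n : ℕ => (-(n : ℤ))) atTop cofinite := by
    rw [← Nat.cofinite_eq_atTop]
    exact Function.Injective.tendsto_cofinite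
      (fun m n h => Nat.cast_injective (neg_injective h))
  have hfirst : Tendsto (fun n : ℕ => ‖a n + a (-(n : ℤ))‖ ^ 2) atTop (nhds 0) := by
    have := (((hz.comp hcast).add (hz.comp hcastneg)).norm).pow 2
    simpa using this
  have hT : Tendsto (fun i : ℕ => Tc (i + 1) + Td (i + 1)) atTop (nhds 0) := by
    have h1 : Tendsto (fun i : ℕ => Tc (i + 1)) atTop (nhds 0) :=
      (tendsto_sum_nat_add c).comp (tendsto_add_atTop_nat 1)
    have h2 : Tendsto (fun i : ℕ => Td (i + 1)) atTop (nhds 0) :=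
      (tendsto_sum_nat_add d).comp (tendsto_add_atTop_nat 1)
    simpa using h1.add h2
  have hcesaro : Tendsto
      (fun n : ℕ => (1 / n : ℝ) * ∑ i ∈ range n, (Tc (i + 1) + Td (i + 1)))
      atTop (nhds 0) := by
    have := hT.cesaro
    simpa [one_div] using this
  have hg : Tendsto g atTop (nhds 0) := by
    have := hfirst.add hcesaro
    simpa [hg_def] using this
  refine tendsto_of_tendsto_of_tendsto_of_le_of_le' tendsto_const_nhds hg
    (Eventually.of_forall (fun n => ?_)) (eventually_atTop.mpr ⟨1, hbound⟩)
  rw [htr n]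
  positivity
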